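/- arXiv:1311.2518 — 5 statements merged into one kernel-verified Lean document; each statement's English description precedes it below -/
import Mathlib

section
/- The Hata attractor K contains the interval [0,1]: if K is the unique nonempty compact set with K = F₁(K) ∪ F₂(K), then [0,1] ⊆ K. -/
open Complex ComplexConjugate Metric NNReal Set

/-!
`F₁ ∘ F₁ = (|α|² • ·)` and `F₂` are contractions of ratio at most `r = max(|α|², 1 - |α|²) < 1`
mapping `K` into itself, and they map `[0, 1]` onto `[0, |α|²]` and `[|α|², 1]`. Let `x₀ = g y`
maximise `d = dist(·, K)` on `[0, 1]`, with `g` one of the two maps and `y ∈ [0, 1]`; then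
`d x₀ ≤ r d y ≤ r d x₀`, so `d` vanishes on `[0, 1]`.
-/

theorem LipschitzWith.infDist_apply_le_of_mapsTo {X : Type*} [PseudoMetricSpace X] {f : X → X}
    {K : Set X} {r : ℝ≥0} (hf : LipschitzWith r f) (hfK : MapsTo f K K) (hK : K.Nonempty)
    (x : X) : infDist (f x) K ≤ r * infDist x K := by
  have : Nonempty K := hK.to_subtype
  rw [infDist_eq_iInf (x := x), Real.mul_iInf_of_nonneg r.coe_nonneg]
  exact le_ciInf fun k =>
    (infDist_le_dist_of_mem (hfK k.2)).trans (hf.dist_le_mul x k)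

theorem subset_of_subset_iUnion_image_of_mapsTo {X ι : Type*} [PseudoMetricSpace X]
    {I K : Set X} {g : ι → X → X} {r : ℝ≥0} (hI : IsCompact I) (hK : IsClosed K)
    (hKne : K.Nonempty) (hr : r < 1) (hg : ∀ i, LipschitzWith r (g i))
    (hgK : ∀ i, MapsTo (g i) K K) (hIg : I ⊆ ⋃ i, g i '' I) : I ⊆ K := by
  rcases I.eq_empty_or_nonempty with rfl | hIne
  · exact empty_subset K
  obtain ⟨x₀, hx₀, hmax⟩ := hI.exists_isMaxOn hIne (continuous_infDist_pt K).continuousOn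
  obtain ⟨i, y, hy, rfl⟩ := mem_iUnion.1 (hIg hx₀)
  have hx₀_infDist : infDist (g i y) K = 0 := by
    have := ((hg i).infDist_apply_le_of_mapsTo (hgK i) hKne y).trans
      (mul_le_mul_of_nonneg_left (hmax hy) r.coe_nonneg)
    have hr' : (r : ℝ) < 1 := hr
    nlinarith [infDist_nonneg (x := g i y) (s := K)]
  intro x hx
  rw [hK.mem_iff_infDist_zero hKne]
  exact le_antisymm (hx₀_infDist ▸ hmax hx) infDist_nonneg

theorem Icc_zero_one_eq_image_mul_union_image_affine {a : ℝ} (ha0 : 0 ≤ a) (ha1 : a < 1) :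
    Icc (0 : ℝ) 1 = (a * ·) '' Icc 0 1 ∪ ((1 - a) * · + a) '' Icc 0 1 := by
  rw [image_mul_left_Icc ha0 zero_le_one, image_affine_Icc' (sub_pos.2 ha1)]
  simp only [mul_zero, mul_one, zero_add, sub_add_cancel]
  exact (Icc_union_Icc_eq_Icc ha0 ha1.le).symm

theorem stmt_5_general (α : ℂ) (hα : 0 < ‖α‖) (hα1 : ‖α‖ < 1)
    (F₁ F₂ : ℂ → ℂ)
    (hF₁ : ∀ z, F₁ z = α * (starRingEnd ℂ) z)
    (hF₂ : ∀ z, F₂ z = (1 - (‖α‖ : ℂ)^2) * (starRingEnd ℂ) z + (‖α‖ : ℂ)^2)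
    (K : Set ℂ) (hKne : K.Nonempty) (hKc : IsCompact K)
    (hK : K = F₁ '' K ∪ F₂ '' K) :
    (fun x : ℝ => (x : ℂ)) '' Icc 0 1 ⊆ K := by
  set a : ℝ := ‖α‖ ^ 2
  have ha0 : 0 < a := by positivity
  have ha1 : a < 1 := pow_lt_one₀ (norm_nonneg α) hα1 two_ne_zero
  have hF₁₁ : ∀ z, F₁ (F₁ z) = a • z := fun z => by
    rw [hF₁, hF₁, map_mul, conj_conj, ← mul_assoc, mul_conj, normSq_eq_norm_sq, real_smul]
  have hF₂' : ∀ z, F₂ z = (1 - a) • conj z + a := fun z => by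
    rw [hF₂, real_smul]; push_cast [a]; rfl
  have hF₁K : MapsTo F₁ K K := fun z hz => hK ▸ Or.inl (mem_image_of_mem F₁ hz)
  have hF₂K : MapsTo F₂ K K := fun z hz => hK ▸ Or.inr (mem_image_of_mem F₂ hz)
  set r := Real.toNNReal (max a (1 - a))
  have hr : (r : ℝ) = max a (1 - a) := Real.coe_toNNReal _ (ha0.le.trans (le_max_left _ _))
  refine subset_of_subset_iUnion_image_of_mapsTo (g := ![F₁ ∘ F₁, F₂]) (r := r)
    (isCompact_Icc.image continuous_ofReal) hKc.isClosed hKne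
    (Real.toNNReal_lt_one.2 (max_lt ha1 (by linarith))) ?_ ?_ ?_
  · refine Fin.forall_fin_two.2 ⟨.of_dist_le_mul fun z w => ?_, .of_dist_le_mul fun z w => ?_⟩
    · show dist (F₁ (F₁ z)) (F₁ (F₁ w)) ≤ r * dist z w
      rw [hF₁₁, hF₁₁, dist_smul₀, Real.norm_of_nonneg ha0.le, hr]
      gcongr; exact le_max_left _ _
    · show dist (F₂ z) (F₂ w) ≤ r * dist z w
      rw [hF₂', hF₂', dist_add_right, dist_smul₀, dist_conj_conj,
        Real.norm_of_nonneg (sub_nonneg.2 ha1.le), hr]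
      gcongr; exact le_max_right _ _
  · exact Fin.forall_fin_two.2 ⟨hF₁K.comp hF₁K, hF₂K⟩
  · rintro _ ⟨t, ht, rfl⟩
    rw [Icc_zero_one_eq_image_mul_union_image_affine ha0.le ha1] at ht
    rcases ht with ⟨y, hy, rfl⟩ | ⟨y, hy, rfl⟩
    · exact mem_iUnion.2 ⟨0, y, mem_image_of_mem _ hy, by simp [hF₁₁]⟩
    · exact mem_iUnion.2 ⟨1, y, mem_image_of_mem _ hy, by simp [hF₂']⟩

theorem stmt_5 (α : ℂ) (hα : 0 < ‖α‖) (hα1 : ‖α‖ < 1)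
    (hα' : 0 < ‖(1 - α)‖) (hα'1 : ‖(1 - α)‖ < 1)
    (F₁ F₂ : ℂ → ℂ)
    (hF₁ : ∀ z, F₁ z = α * (starRingEnd ℂ) z)
    (hF₂ : ∀ z, F₂ z = (1 - (‖α‖ : ℂ)^2) * (starRingEnd ℂ) z + (‖α‖ : ℂ)^2)
    (K : Set ℂ) (hKne : K.Nonempty) (hKc : IsCompact K)
    (hK : K = F₁ '' K ∪ F₂ '' K) :
    (fun x : ℝ => (x : ℂ)) '' Icc 0 1 ⊆ K :=
  stmt_5_general α hα hα1 F₁ F₂ hF₁ hF₂ K hKne hKc hK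
end

section
/- Let h > 1, a = |α|² ∈ (0,1), θ = 1/h². There exists a unique bounded function f : [0,1] → ℝ satisfying f(0)=0, f(1)=1, f(x) = θ·f(x/a) for 0 ≤ x ≤ a, and f(x) = (1−θ)·f((x − a)/(1−a)) + θ for a ≤ x ≤ 1, and f is continuous and increasing. -/
open Set

namespace Stmt11

noncomputable section

abbrev I01 : Type := ↥(Icc (0:ℝ) 1)

def z0 : I01 := ⟨0, by norm_num⟩
def z1 : I01 := ⟨1, by norm_num⟩

def pr (x : ℝ) : I01 := projIcc 0 1 zero_le_one x

lemma pr_cont : Continuous pr := continuous_projIcc (h := zero_le_one)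

lemma pr_mono : Monotone pr := monotone_projIcc zero_le_one

def Tfun (a θ : ℝ) (g : C(I01, ℝ)) : I01 → ℝ :=
  fun x => if (x:ℝ) ≤ a then θ * g (pr ((x:ℝ)/a)) else (1-θ) * g (pr (((x:ℝ)-a)/(1-a))) + θ

def Good (g : C(I01, ℝ)) : Prop := g z0 = 0 ∧ g z1 = 1 ∧ Monotone g

lemma pr_one_div {a : ℝ} (ha : a ∈ Ioo (0:ℝ) 1) : pr (a / a) = z1 := by
  rw [div_self (ne_of_gt ha.1)]
  simp [pr, z1, projIcc, max_eq_right]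

lemma pr_zero : pr 0 = z0 := by
  simp [pr, z0, projIcc]

lemma pr_one : pr 1 = z1 := by
  simp [pr, z1, projIcc]

lemma pr_of_mem {x : ℝ} (hx : x ∈ Icc (0:ℝ) 1) : pr x = ⟨x, hx⟩ :=
  projIcc_of_mem _ hx

lemma Tcont {a θ : ℝ} (ha : a ∈ Ioo (0:ℝ) 1) (g : C(I01, ℝ)) (hg : Good g) :
    Continuous (Tfun a θ g) := by
  apply Continuous.if_le
  · exact continuous_const.mul (g.continuous.comp (pr_cont.comp (continuous_subtype_val.div_const a)))
  · exact (continuous_const.mul (g.continuous.comp (pr_cont.comp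
      ((continuous_subtype_val.sub continuous_const).div_const (1-a))))).add continuous_const
  · exact continuous_subtype_val
  · exact continuous_const
  · intro x hx
    rw [hx, pr_one_div ha, sub_self, zero_div, pr_zero, hg.1, hg.2.1]
    ring

lemma T_zero {a θ : ℝ} (ha : a ∈ Ioo (0:ℝ) 1) (g : C(I01, ℝ)) (hg : Good g) :
    Tfun a θ g z0 = 0 := by
  have h0 : ((z0 : I01) : ℝ) = 0 := rfl
  simp only [Tfun, h0]
  rw [if_pos (le_of_lt ha.1), zero_div, pr_zero, hg.1, mul_zero]

lemma T_one {a θ : ℝ} (ha : a ∈ Ioo (0:ℝ) 1) (g : C(I01, ℝ)) (hg : Good g) :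
    Tfun a θ g z1 = 1 := by
  have h1 : ((z1 : I01) : ℝ) = 1 := rfl
  simp only [Tfun, h1]
  rw [if_neg (not_le.mpr ha.2), div_self (by linarith [ha.2] : (1:ℝ) - a ≠ 0), pr_one, hg.2.1]
  ring

lemma g_le_one (g : C(I01, ℝ)) (hg : Good g) (x : I01) : g x ≤ 1 := by
  have h := hg.2.2 (show x ≤ z1 from x.2.2)
  rwa [hg.2.1] at h

lemma g_nonneg (g : C(I01, ℝ)) (hg : Good g) (x : I01) : 0 ≤ g x := by
  have h := hg.2.2 (show z0 ≤ x from x.2.1)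
  rwa [hg.1] at h

lemma T_mono {a θ : ℝ} (ha : a ∈ Ioo (0:ℝ) 1) (hθ : θ ∈ Ioo (0:ℝ) 1)
    (g : C(I01, ℝ)) (hg : Good g) : Monotone (Tfun a θ g) := by
  intro x v hxv
  have hxv' : (x:ℝ) ≤ (v:ℝ) := hxv
  simp only [Tfun]
  by_cases hx : (x:ℝ) ≤ a
  · rw [if_pos hx]
    by_cases hv : (v:ℝ) ≤ a
    · rw [if_pos hv]
      apply mul_le_mul_of_nonneg_left _ (le_of_lt hθ.1)
      exact hg.2.2 (pr_mono (div_le_div_of_nonneg_right hxv' (le_of_lt ha.1)))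
    · rw [if_neg hv]
      have h1 : θ * g (pr ((x:ℝ)/a)) ≤ θ :=
        (mul_le_of_le_one_right (le_of_lt hθ.1) (g_le_one g hg _))
      have h2 : 0 ≤ (1-θ) * g (pr (((v:ℝ)-a)/(1-a))) :=
        mul_nonneg (by linarith [hθ.2]) (g_nonneg g hg _)
      linarith
  · rw [if_neg hx, if_neg (by intro hv; exact hx (le_trans hxv' hv))]
    have := hg.2.2 (pr_mono (div_le_div_of_nonneg_right (by linarith : (x:ℝ) - a ≤ (v:ℝ) - a)
      (by linarith [ha.2] : (0:ℝ) ≤ 1 - a)))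
    nlinarith [hθ.2]

lemma T_dist {a θ : ℝ} (ha : a ∈ Ioo (0:ℝ) 1) (hθ : θ ∈ Ioo (0:ℝ) 1)
    (g₁ g₂ : C(I01, ℝ)) (x : I01) :
    dist (Tfun a θ g₁ x) (Tfun a θ g₂ x) ≤ max θ (1-θ) * dist g₁ g₂ := by
  simp only [Tfun]
  by_cases hx : (x:ℝ) ≤ a
  · rw [if_pos hx, if_pos hx, Real.dist_eq]
    have h : θ * g₁ (pr ((x:ℝ)/a)) - θ * g₂ (pr ((x:ℝ)/a))
        = θ * (g₁ (pr ((x:ℝ)/a)) - g₂ (pr ((x:ℝ)/a))) := by ring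
    rw [h, abs_mul, abs_of_pos hθ.1]
    have h2 : |g₁ (pr ((x:ℝ)/a)) - g₂ (pr ((x:ℝ)/a))| ≤ dist g₁ g₂ := by
      rw [← Real.dist_eq]; exact ContinuousMap.dist_apply_le_dist _
    nlinarith [le_max_left θ (1-θ), dist_nonneg (x := g₁) (y := g₂), hθ.1, abs_nonneg
      (g₁ (pr ((x:ℝ)/a)) - g₂ (pr ((x:ℝ)/a)))]
  · rw [if_neg hx, if_neg hx, Real.dist_eq]
    set u := pr (((x:ℝ)-a)/(1-a))
    have h : (1-θ) * g₁ u + θ - ((1-θ) * g₂ u + θ) = (1-θ) * (g₁ u - g₂ u) := by ring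
    rw [h, abs_mul, abs_of_pos (by linarith [hθ.2] : (0:ℝ) < 1 - θ)]
    have h2 : |g₁ u - g₂ u| ≤ dist g₁ g₂ := by
      rw [← Real.dist_eq]; exact ContinuousMap.dist_apply_le_dist _
    nlinarith [le_max_right θ (1-θ), dist_nonneg (x := g₁) (y := g₂), hθ.2, abs_nonneg
      (g₁ u - g₂ u)]

lemma uniq {a θ : ℝ} (ha : a ∈ Ioo (0:ℝ) 1) (hθ : θ ∈ Ioo (0:ℝ) 1) (f g : ℝ → ℝ)
    (hf2 : ∀ t ∈ Icc (0:ℝ) 1, f (a * t) = θ * f t)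
    (hf3 : ∀ t ∈ Icc (0:ℝ) 1, f (a + (1 - a) * t) = (1 - θ) * f t + θ)
    (hfC : ∃ C : ℝ, ∀ x ∈ Icc (0:ℝ) 1, |f x| ≤ C)
    (hg2 : ∀ t ∈ Icc (0:ℝ) 1, g (a * t) = θ * g t)
    (hg3 : ∀ t ∈ Icc (0:ℝ) 1, g (a + (1 - a) * t) = (1 - θ) * g t + θ)
    (hgC : ∃ C : ℝ, ∀ x ∈ Icc (0:ℝ) 1, |g x| ≤ C) :
    EqOn g f (Icc 0 1) := by
  obtain ⟨Cf, hCf⟩ := hfC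
  obtain ⟨Cg, hCg⟩ := hgC
  set E : Set ℝ := (fun x => |g x - f x|) '' Icc 0 1 with hE
  set D : ℝ := sSup E with hD
  have h01 : (0:ℝ) ∈ Icc (0:ℝ) 1 := ⟨le_refl _, zero_le_one⟩
  have hne : E.Nonempty := ⟨|g 0 - f 0|, 0, h01, rfl⟩
  have hbdd : BddAbove E := by
    refine ⟨Cg + Cf, ?_⟩
    rintro y ⟨x, hx, rfl⟩
    calc |g x - f x| ≤ |g x| + |f x| := abs_sub _ _
      _ ≤ Cg + Cf := add_le_add (hCg x hx) (hCf x hx)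
  have hD0 : 0 ≤ D := le_trans (abs_nonneg _) (le_csSup hbdd ⟨0, h01, rfl⟩)
  have key : ∀ x ∈ Icc (0:ℝ) 1, |g x - f x| ≤ max θ (1-θ) * D := by
    intro x hx
    by_cases hxa : x ≤ a
    · set t : ℝ := x / a with htd
      have ht : t ∈ Icc (0:ℝ) 1 := ⟨div_nonneg hx.1 ha.1.le, (div_le_one ha.1).mpr hxa⟩
      have hx_eq : a * t = x := by rw [htd]; field_simp; exact mul_div_cancel_left₀ x (ne_of_gt ha.1)
      have h : g x - f x = θ * (g t - f t) := by
        rw [← hx_eq, hg2 t ht, hf2 t ht]; ring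
      rw [h, abs_mul, abs_of_pos hθ.1]
      have hle : |g t - f t| ≤ D := le_csSup hbdd ⟨t, ht, rfl⟩
      nlinarith [le_max_left θ (1-θ), hθ.1, abs_nonneg (g t - f t)]
    · set t : ℝ := (x - a) / (1 - a) with htd
      have h1a : (0:ℝ) < 1 - a := by linarith [ha.2]
      have ht : t ∈ Icc (0:ℝ) 1 := ⟨div_nonneg (by linarith [not_le.mp hxa]) h1a.le,
        (div_le_one h1a).mpr (by linarith [hx.2])⟩
      have hx_eq : a + (1 - a) * t = x := by rw [htd]; field_simp; ring
      have h : g x - f x = (1-θ) * (g t - f t) := by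
        rw [← hx_eq, hg3 t ht, hf3 t ht]; ring
      rw [h, abs_mul, abs_of_pos (by linarith [hθ.2] : (0:ℝ) < 1 - θ)]
      have hle : |g t - f t| ≤ D := le_csSup hbdd ⟨t, ht, rfl⟩
      nlinarith [le_max_right θ (1-θ), hθ.2, abs_nonneg (g t - f t)]
  have hDk : D ≤ max θ (1-θ) * D := by
    apply csSup_le hne
    rintro y ⟨x, hx, rfl⟩
    exact key x hx
  have hmax : max θ (1-θ) < 1 := max_lt hθ.2 (by linarith [hθ.1])
  have hDz : D ≤ 0 := by nlinarith
  intro x hx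
  have h2 : |g x - f x| ≤ 0 :=
    (key x hx).trans (mul_nonpos_of_nonneg_of_nonpos
      (le_trans hθ.1.le (le_max_left _ _)) hDz)
  exact sub_eq_zero.mp (abs_eq_zero.mp (le_antisymm h2 (abs_nonneg _)))

end

end Stmt11

open Stmt11 in
theorem stmt_11 (a θ : ℝ) (ha : a ∈ Ioo (0:ℝ) 1) (hθ : θ ∈ Ioo (0:ℝ) 1) :
    ∃ f : ℝ → ℝ,
      (f 0 = 0 ∧ f 1 = 1 ∧
        (∀ t ∈ Icc (0:ℝ) 1, f (a * t) = θ * f t) ∧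
        (∀ t ∈ Icc (0:ℝ) 1, f (a + (1 - a) * t) = (1 - θ) * f t + θ) ∧
        (∃ C : ℝ, ∀ x ∈ Icc (0:ℝ) 1, |f x| ≤ C)) ∧
      ContinuousOn f (Icc 0 1) ∧ MonotoneOn f (Icc 0 1) ∧
      ∀ g : ℝ → ℝ,
        (g 0 = 0 ∧ g 1 = 1 ∧
          (∀ t ∈ Icc (0:ℝ) 1, g (a * t) = θ * g t) ∧
          (∀ t ∈ Icc (0:ℝ) 1, g (a + (1 - a) * t) = (1 - θ) * g t + θ) ∧
          (∃ C : ℝ, ∀ x ∈ Icc (0:ℝ) 1, |g x| ≤ C)) →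
        EqOn g f (Icc 0 1) := by
  classical
  obtain ⟨ha0, ha1⟩ := id ha
  obtain ⟨hθ0, hθ1⟩ := id hθ
  -- the closed subset of good functions
  let S : Set C(I01, ℝ) := {g | Good g}
  have hMc : IsClosed {g : C(I01, ℝ) | Monotone ⇑g} := by
    have : {g : C(I01, ℝ) | Monotone ⇑g}
        = ⋂ (p : I01 × I01) (_ : p.1 ≤ p.2), {g : C(I01, ℝ) | g p.1 ≤ g p.2} := by
      ext g
      simp only [mem_setOf_eq, mem_iInter, Monotone]
      exact ⟨fun h p hp => h hp, fun h x y hxy => h (x, y) hxy⟩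
    rw [this]
    exact isClosed_iInter fun p => isClosed_iInter fun _ =>
      isClosed_le (continuous_eval_const p.1)
        (continuous_eval_const p.2)
  have hSc : IsClosed S := by
    have h1 : IsClosed {g : C(I01, ℝ) | g z0 = 0} :=
      isClosed_eq (continuous_eval_const z0) continuous_const
    have h2 : IsClosed {g : C(I01, ℝ) | g z1 = 1} :=
      isClosed_eq (continuous_eval_const z1) continuous_const
    exact h1.inter (h2.inter hMc)
  haveI : CompleteSpace S := hSc.completeSpace_coe
  haveI : Nonempty S := ⟨⟨⟨fun x => (x:ℝ), continuous_subtype_val⟩,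
    rfl, rfl, fun x y hxy => hxy⟩⟩
  -- the contraction
  let T : S → S := fun g =>
    ⟨⟨Tfun a θ g.1, Tcont ha g.1 g.2⟩,
      T_zero ha g.1 g.2, T_one ha g.1 g.2, T_mono ha hθ g.1 g.2⟩
  let k : NNReal := ⟨max θ (1-θ), le_trans hθ0.le (le_max_left _ _)⟩
  have hk1 : k < 1 := by
    have h : (k : ℝ) < 1 := max_lt hθ1 (by linarith)
    exact_mod_cast h
  have hlip : LipschitzWith k T := by
    apply LipschitzWith.of_dist_le_mul
    intro g₁ g₂
    rw [Subtype.dist_eq, Subtype.dist_eq]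
    have hnn : (0:ℝ) ≤ (k:ℝ) * dist g₁.1 g₂.1 := mul_nonneg k.2 dist_nonneg
    rw [ContinuousMap.dist_le hnn]
    intro x
    exact T_dist ha hθ g₁.1 g₂.1 x
  have hcontr : ContractingWith k T := ⟨hk1, hlip⟩
  let F : S := hcontr.fixedPoint T
  have hfix : T F = F := hcontr.fixedPoint_isFixedPt
  have hfp : ∀ x : I01, Tfun a θ F.1 x = F.1 x :=
    fun x => ContinuousMap.congr_fun (congrArg Subtype.val hfix) x
  -- the function
  set f0 : ℝ → ℝ := fun x => F.1 (pr x) with hf0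
  have heq1 : ∀ t ∈ Icc (0:ℝ) 1, f0 (a * t) = θ * f0 t := by
    intro t ht
    have hat : a * t ∈ Icc (0:ℝ) 1 :=
      ⟨mul_nonneg ha0.le ht.1, by nlinarith [ht.2]⟩
    show F.1 (pr (a * t)) = θ * F.1 (pr t)
    rw [pr_of_mem hat, pr_of_mem ht, ← hfp ⟨a * t, hat⟩]
    simp only [Tfun]
    rw [if_pos (show ((⟨a * t, hat⟩ : I01) : ℝ) ≤ a from by
      show a * t ≤ a; nlinarith [ht.1, ht.2])]
    show θ * F.1 (pr (a * t / a)) = θ * F.1 ⟨t, ht⟩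
    rw [mul_div_cancel_left₀ t (ne_of_gt ha0), pr_of_mem ht]
  have heq2 : ∀ t ∈ Icc (0:ℝ) 1, f0 (a + (1 - a) * t) = (1 - θ) * f0 t + θ := by
    intro t ht
    have h1a : (0:ℝ) < 1 - a := by linarith
    have hat : a + (1 - a) * t ∈ Icc (0:ℝ) 1 :=
      ⟨by nlinarith [ht.1], by nlinarith [ht.2]⟩
    show F.1 (pr (a + (1 - a) * t)) = (1 - θ) * F.1 (pr t) + θ
    rw [pr_of_mem hat, pr_of_mem ht, ← hfp ⟨a + (1 - a) * t, hat⟩]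
    simp only [Tfun]
    rcases eq_or_lt_of_le ht.1 with h0 | h0
    · -- t = 0
      rw [if_pos (show ((⟨a + (1 - a) * t, hat⟩ : I01) : ℝ) ≤ a from by
        show a + (1 - a) * t ≤ a; nlinarith)]
      show θ * F.1 (pr ((a + (1 - a) * t) / a)) = (1 - θ) * F.1 ⟨t, ht⟩ + θ
      have hc : (a + (1 - a) * t) / a = a / a := by rw [← h0]; norm_num
      have hz : (⟨t, ht⟩ : I01) = z0 := Subtype.ext h0.symm
      rw [hc, pr_one_div ha, F.2.2.1, hz, F.2.1]
      ring
    · -- t > 0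
      rw [if_neg (show ¬ ((⟨a + (1 - a) * t, hat⟩ : I01) : ℝ) ≤ a from by
        show ¬ a + (1 - a) * t ≤ a; push_neg; nlinarith)]
      show (1 - θ) * F.1 (pr ((a + (1 - a) * t - a) / (1 - a))) + θ
          = (1 - θ) * F.1 ⟨t, ht⟩ + θ
      rw [add_sub_cancel_left, mul_div_cancel_left₀ t (ne_of_gt h1a), pr_of_mem ht]
  have hbd : ∃ C : ℝ, ∀ x ∈ Icc (0:ℝ) 1, |f0 x| ≤ C :=
    ⟨‖F.1‖, fun x _ => by
      rw [← Real.norm_eq_abs]; exact F.1.norm_coe_le_norm (pr x)⟩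
  refine ⟨f0, ⟨?_, ?_, heq1, heq2, hbd⟩, ?_, ?_, ?_⟩
  · show F.1 (pr 0) = 0
    rw [pr_zero]; exact F.2.1
  · show F.1 (pr 1) = 1
    rw [pr_one]; exact F.2.2.1
  · exact (F.1.continuous.comp pr_cont).continuousOn
  · exact (F.2.2.2.comp pr_mono).monotoneOn _
  · rintro g ⟨-, -, hg2, hg3, hgC⟩
    exact uniq ha hθ f0 g heq1 heq2 hbd hg2 hg3 hgC
end

section
/- The function f : [0,1] → ℝ satisfying f(a·t) = θ·f(t) and f(a + (1−a)t) = (1−θ)·f(t) + θ for all t ∈ [0,1], with f(0)=0, f(1)=1, f continuous, is strictly increasing. -/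
/-!
With `c = max a (1 - a)`, we show by induction on `n` that `f x < f y` whenever
`c ^ n ≤ y - x`. If `x, y` lie in the same piece `[0, a]` or `[a, 1]`, the functional
equations rescale the pair to one with gap at least `c ^ (n - 1)`. If `x < a < y`, then
`f x < θ = f a < f y`, which needs `f < 1` on `[0, 1)` and `0 < f` on `(0, 1]`. The second
follows from `0 ≤ f` (a minimum principle) by iterating the equation on `[0, a]`; the first
is the second applied to `t ↦ 1 - f (1 - t)`, which solves the system for `(1 - a, 1 - θ)`.
-/

open Set

structure IsDeRhamSolution (a θ : ℝ) (f : ℝ → ℝ) : Prop where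
  map_zero : f 0 = 0
  map_one : f 1 = 1
  continuousOn : ContinuousOn f (Icc 0 1)
  map_left : ∀ t ∈ Icc (0:ℝ) 1, f (a * t) = θ * f t
  map_right : ∀ t ∈ Icc (0:ℝ) 1, f (a + (1 - a) * t) = (1 - θ) * f t + θ

lemma exists_mem_Icc_mul_eq {a t : ℝ} (ha : 0 < a) (ht : t ∈ Icc 0 a) :
    ∃ s ∈ Icc (0:ℝ) 1, a * s = t :=
  ⟨t / a, ⟨div_nonneg ht.1 ha.le, div_le_one_of_le₀ ht.2 ha.le⟩, mul_div_cancel₀ t ha.ne'⟩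

lemma exists_mem_Icc_add_mul_eq {a t : ℝ} (ha : a < 1) (ht : t ∈ Icc a 1) :
    ∃ s ∈ Icc (0:ℝ) 1, a + (1 - a) * s = t := by
  obtain ⟨s, hs, hst⟩ :=
    exists_mem_Icc_mul_eq (sub_pos.2 ha) ⟨sub_nonneg.2 ht.1, by linarith [ht.2]⟩
  exact ⟨s, hs, by linarith⟩

namespace IsDeRhamSolution

variable {a θ : ℝ} {f : ℝ → ℝ}

theorem dual (h : IsDeRhamSolution a θ f) :
    IsDeRhamSolution (1 - a) (1 - θ) (fun t ↦ 1 - f (1 - t)) where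
  map_zero := by simp [h.map_one]
  map_one := by simp [h.map_zero]
  continuousOn := continuousOn_const.sub <|
    h.continuousOn.comp (continuousOn_const.sub continuousOn_id) fun _ ↦ Icc.one_sub_mem
  map_left t ht := by
    have := h.map_right (1 - t) (Icc.one_sub_mem ht)
    rw [show 1 - (1 - a) * t = a + (1 - a) * (1 - t) by ring, this]
    ring
  map_right t ht := by
    have := h.map_left (1 - t) (Icc.one_sub_mem ht)
    rw [show 1 - (1 - a + (1 - (1 - a)) * t) = a * (1 - t) by ring, this]
    ring

variable (h : IsDeRhamSolution a θ f) (ha : a ∈ Ioo 0 1) (hθ : θ ∈ Ioo 0 1)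
include h ha hθ

theorem nonneg {t : ℝ} (ht : t ∈ Icc 0 1) : 0 ≤ f t := by
  obtain ⟨x₀, hx₀, hmin⟩ :=
    isCompact_Icc.exists_isMinOn (nonempty_Icc.2 zero_le_one) h.continuousOn
  have hmin' : ∀ s ∈ Icc (0:ℝ) 1, f x₀ ≤ f s := fun s hs ↦ hmin hs
  suffices 0 ≤ f x₀ from this.trans (hmin' t ht)
  rcases le_total x₀ a with hx | hx
  · obtain ⟨s, hs, rfl⟩ := exists_mem_Icc_mul_eq ha.1 ⟨hx₀.1, hx⟩
    have := h.map_left s hs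
    nlinarith [mul_le_mul_of_nonneg_left (hmin' s hs) hθ.1.le, hθ.2]
  · obtain ⟨s, hs, rfl⟩ := exists_mem_Icc_add_mul_eq ha.2 ⟨hx, hx₀.2⟩
    have := h.map_right s hs
    nlinarith [hmin' s hs, hθ.1, hθ.2]

theorem pos {t : ℝ} (ht : t ∈ Ioc 0 1) : 0 < f t := by
  suffices ∀ n : ℕ, ∀ t ∈ Icc (0:ℝ) 1, a ^ n ≤ t → 0 < f t by
    obtain ⟨n, hn⟩ := exists_pow_lt_of_lt_one ht.1 ha.2
    exact this n t (Ioc_subset_Icc_self ht) hn.le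
  intro n
  induction n with
  | zero =>
    intro t ht hle
    rw [le_antisymm ht.2 (by simpa using hle), h.map_one]
    exact one_pos
  | succ n ih =>
    intro t ht hle
    rcases le_total a t with hat | hta
    · obtain ⟨s, hs, rfl⟩ := exists_mem_Icc_add_mul_eq ha.2 ⟨hat, ht.2⟩
      rw [h.map_right s hs]
      nlinarith [h.nonneg ha hθ hs, hθ.1, hθ.2]
    · obtain ⟨s, hs, rfl⟩ := exists_mem_Icc_mul_eq ha.1 ⟨ht.1, hta⟩
      rw [h.map_left s hs]
      have : a ^ n ≤ s := le_of_mul_le_mul_left (by rwa [← pow_succ']) ha.1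
      exact mul_pos hθ.1 (ih s hs this)

theorem lt_one {t : ℝ} (ht : t ∈ Ico 0 1) : f t < 1 := by
  have := h.dual.pos (Ioo.one_sub_mem ha) (Ioo.one_sub_mem hθ) (t := 1 - t)
    ⟨by linarith [ht.2], by linarith [ht.1]⟩
  simpa using this

theorem lt_of_pow_le_sub (n : ℕ) {x y : ℝ} (hx : x ∈ Icc 0 1) (hy : y ∈ Icc 0 1)
    (hxy : max a (1 - a) ^ n ≤ y - x) : f x < f y := by
  set c := max a (1 - a)
  have hc : 0 < c := lt_max_of_lt_left ha.1
  induction n generalizing x y with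
  | zero =>
    rw [pow_zero] at hxy
    rw [le_antisymm (by linarith [hy.2]) hx.1, le_antisymm hy.2 (by linarith [hx.1]),
      h.map_zero, h.map_one]
    exact one_pos
  | succ n ih =>
    have hlt : x < y := by linarith [pow_pos hc (n + 1)]
    have rescale {r u v : ℝ} (hr0 : 0 < r) (hr : r ≤ c) (hgap : c ^ (n + 1) ≤ r * (v - u)) :
        c ^ n ≤ v - u := by
      have : 0 < v - u := pos_of_mul_pos_right (hgap.trans_lt' (pow_pos hc _)) hr0.le
      exact le_of_mul_le_mul_left (by nlinarith [pow_succ' c n]) hc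
    rcases le_or_gt y a with hya | hay
    · obtain ⟨u, hu, rfl⟩ := exists_mem_Icc_mul_eq ha.1 ⟨hx.1, by linarith⟩
      obtain ⟨v, hv, rfl⟩ := exists_mem_Icc_mul_eq ha.1 ⟨hy.1, hya⟩
      rw [h.map_left u hu, h.map_left v hv]
      have := ih hu hv (rescale ha.1 (le_max_left _ _) (by linarith))
      exact mul_lt_mul_of_pos_left this hθ.1
    rcases le_or_gt a x with hax | hxa
    · obtain ⟨u, hu, rfl⟩ := exists_mem_Icc_add_mul_eq ha.2 ⟨hax, hx.2⟩
      obtain ⟨v, hv, rfl⟩ := exists_mem_Icc_add_mul_eq ha.2 ⟨by linarith, hy.2⟩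
      rw [h.map_right u hu, h.map_right v hv]
      have := ih hu hv (rescale (sub_pos.2 ha.2) (le_max_right _ _) (by linarith))
      nlinarith [hθ.2]
    · obtain ⟨u, hu, rfl⟩ := exists_mem_Icc_mul_eq ha.1 ⟨hx.1, hxa.le⟩
      obtain ⟨v, hv, rfl⟩ := exists_mem_Icc_add_mul_eq ha.2 ⟨hay.le, hy.2⟩
      have hu1 : u < 1 := lt_of_mul_lt_mul_left (by linarith) ha.1.le
      have hv0 : 0 < v := pos_of_mul_pos_right (by linarith) (sub_pos.2 ha.2).le
      rw [h.map_left u hu, h.map_right v hv]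
      nlinarith [h.lt_one ha hθ ⟨hu.1, hu1⟩, h.pos ha hθ ⟨hv0, hv.2⟩, hθ.1, hθ.2]

theorem strictMonoOn : StrictMonoOn f (Icc 0 1) := by
  intro x hx y hy hxy
  obtain ⟨n, hn⟩ :=
    exists_pow_lt_of_lt_one (sub_pos.2 hxy) (max_lt ha.2 (by linarith [ha.1] : 1 - a < 1))
  exact h.lt_of_pow_le_sub ha hθ n hx hy hn.le

end IsDeRhamSolution

theorem stmt_12 (a θ : ℝ) (ha : a ∈ Ioo (0:ℝ) 1) (hθ : θ ∈ Ioo (0:ℝ) 1)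
    (f : ℝ → ℝ) (hf0 : f 0 = 0) (hf1 : f 1 = 1)
    (hcont : ContinuousOn f (Icc 0 1))
    (heq1 : ∀ t ∈ Icc (0:ℝ) 1, f (a * t) = θ * f t)
    (heq2 : ∀ t ∈ Icc (0:ℝ) 1, f (a + (1 - a) * t) = (1 - θ) * f t + θ) :
    StrictMonoOn f (Icc 0 1) :=
  IsDeRhamSolution.strictMonoOn ⟨hf0, hf1, hcont, heq1, heq2⟩ ha hθ
end

section
/- If θ = a (i.e., 1/h² = |α|²), then the unique continuous solution of f(a·t) = θ·f(t), f(a + (1−a)t) = (1−θ)f(t) + θ, f(0)=0, f(1)=1 is the identity: f(x) = x for all x ∈ [0,1]. -/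
/-!
The defect `f x - x` is continuous on `[0, 1]`, and the two functional equations say that on
`[0, a]` and on `[a, 1]` it is a copy of itself scaled by `a` and by `1 - a` respectively.
So its maximal absolute value `M` satisfies `M ≤ max a (1 - a) * M`, which forces `M = 0`.
-/

open Set

theorem eqOn_zero_of_norm_le_mul_norm {α E : Type*} [TopologicalSpace α] [NormedAddCommGroup E]
    {s : Set α} (hs : IsCompact s) {h : α → E} (hh : ContinuousOn h s) {q : ℝ} (hq : q < 1)
    (hself : ∀ x ∈ s, ∃ t ∈ s, ‖h x‖ ≤ q * ‖h t‖) :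
    ∀ x ∈ s, h x = 0 := by
  intro x hx
  obtain ⟨x₀, hx₀, hmax⟩ := hs.exists_isMaxOn ⟨x, hx⟩ hh.norm
  obtain ⟨t, ht, hle⟩ := hself x₀ hx₀
  have hM : ‖h x₀‖ ≤ max q 0 * ‖h x₀‖ :=
    calc ‖h x₀‖ ≤ q * ‖h t‖ := hle
      _ ≤ max q 0 * ‖h t‖ := by gcongr; exact le_max_left _ _
      _ ≤ max q 0 * ‖h x₀‖ := by gcongr; exact hmax ht
  have hM0 : ‖h x₀‖ = 0 := by
    nlinarith [norm_nonneg (h x₀), max_lt hq zero_lt_one]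
  exact norm_le_zero_iff.mp (hM0 ▸ hmax hx)

theorem exists_mem_Icc_eq_mul_or_eq_add_mul {a x : ℝ} (ha : a ∈ Ioo (0 : ℝ) 1)
    (hx : x ∈ Icc (0 : ℝ) 1) :
    ∃ t ∈ Icc (0 : ℝ) 1, x = a * t ∨ x = a + (1 - a) * t := by
  obtain ⟨ha0, ha1⟩ := ha
  rcases le_or_gt x a with hxa | hax
  · refine ⟨x / a, ⟨div_nonneg hx.1 ha0.le, (div_le_one ha0).2 hxa⟩, Or.inl ?_⟩
    field_simp
  · have h1a : 0 < 1 - a := sub_pos.mpr ha1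
    refine ⟨(x - a) / (1 - a), ⟨div_nonneg (by linarith) h1a.le, ?_⟩, Or.inr ?_⟩
    · rw [div_le_one h1a]; linarith [hx.2]
    · field_simp; ring

theorem stmt_13_general (a θ : ℝ) (ha : a ∈ Ioo (0:ℝ) 1) (hθa : θ = a)
    (f : ℝ → ℝ)
    (hcont : ContinuousOn f (Icc 0 1))
    (heq1 : ∀ t ∈ Icc (0:ℝ) 1, f (a * t) = θ * f t)
    (heq2 : ∀ t ∈ Icc (0:ℝ) 1, f (a + (1 - a) * t) = (1 - θ) * f t + θ) :
    ∀ x ∈ Icc (0:ℝ) 1, f x = x := by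
  subst θ
  have hdefect_zero := eqOn_zero_of_norm_le_mul_norm isCompact_Icc
    (hcont.sub continuousOn_id) (q := max a (1 - a)) (max_lt ha.2 (sub_lt_self 1 ha.1)) <| by
      intro x hx
      refine (exists_mem_Icc_eq_mul_or_eq_add_mul ha hx).imp fun t ⟨ht, hxt⟩ => ⟨ht, ?_⟩
      rcases hxt with rfl | rfl
      · rw [Pi.sub_apply, id, heq1 t ht, ← mul_sub, norm_mul, Real.norm_of_nonneg ha.1.le]
        exact mul_le_mul_of_nonneg_right (le_max_left _ _) (norm_nonneg _)
      · rw [Pi.sub_apply, id, heq2 t ht,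
          show (1 - a) * f t + a - (a + (1 - a) * t) = (1 - a) * (f t - t) by ring, norm_mul,
          Real.norm_of_nonneg (sub_nonneg.mpr ha.2.le)]
        exact mul_le_mul_of_nonneg_right (le_max_right _ _) (norm_nonneg _)
  exact fun x hx => sub_eq_zero.mp (hdefect_zero x hx)

theorem stmt_13 (a θ : ℝ) (ha : a ∈ Ioo (0:ℝ) 1) (hθa : θ = a)
    (f : ℝ → ℝ) (hf0 : f 0 = 0) (hf1 : f 1 = 1)
    (hcont : ContinuousOn f (Icc 0 1))
    (heq1 : ∀ t ∈ Icc (0:ℝ) 1, f (a * t) = θ * f t)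
    (heq2 : ∀ t ∈ Icc (0:ℝ) 1, f (a + (1 - a) * t) = (1 - θ) * f t + θ) :
    ∀ x ∈ Icc (0:ℝ) 1, f x = x :=
  stmt_13_general a θ ha hθa f hcont heq1 heq2
end

section
/- If θ ≠ a, then the unique continuous increasing solution f of f(a·t)=θf(t), f(a+(1−a)t)=(1−θ)f(t)+θ, f(0)=0, f(1)=1 is singular: f is differentiable with f'(x)=0 at Lebesgue-almost every x ∈ [0,1]. -/
/-!
Write `D = f'`, which exists a.e. on `(0, 1)` and is integrable since `f` is monotone. Differentiating
the two functional equations gives `D (a t) = (θ / a) D t` and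
`D (a + (1 - a) t) = ((1 - θ) / (1 - a)) D t`, so by an affine change of variables on `[0, a]` and
`[a, 1]` the integral `J = ∫₀¹ √D` satisfies `J = (√(a θ) + √((1 - a)(1 - θ))) J`. By AM-GM the
factor is `< 1` as soon as `a ≠ θ`, hence `J = 0`, i.e. `D = 0` a.e. (Integrating `D` itself
only returns `θ + (1 - θ) = 1`; the square root is what makes the factor contract.)
-/

open Set MeasureTheory

theorem sqrt_mul_add_sqrt_one_sub_mul_one_sub_lt_one {a θ : ℝ} (ha : a ∈ Icc (0:ℝ) 1)
    (hθ : θ ∈ Icc (0:ℝ) 1) (hne : θ ≠ a) :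
    √(a * θ) + √((1 - a) * (1 - θ)) < 1 := by
  obtain ⟨ha0, ha1⟩ := ha
  obtain ⟨hθ0, hθ1⟩ := hθ
  have hpos : 0 < (a + θ) / 2 := by
    rcases lt_or_gt_of_ne hne with h | h <;> linarith
  have hsq : 0 < (a - θ) ^ 2 := by positivity
  have h₁ : √(a * θ) < (a + θ) / 2 := (Real.sqrt_lt' hpos).2 (by nlinarith)
  have h₂ : √((1 - a) * (1 - θ)) ≤ ((1 - a) + (1 - θ)) / 2 :=
    (Real.sqrt_le_left (by linarith)).2 (by nlinarith)
  linarith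

theorem Real.sqrt_le_one_add_abs (y : ℝ) : √y ≤ 1 + |y| :=
  (Real.sqrt_le_left (by positivity)).2 (by nlinarith [le_abs_self y, abs_nonneg y])

theorem HasDerivAt.add_mul_of_self_similar {f : ℝ → ℝ} {f' p r c d t : ℝ}
    (hf : HasDerivAt f f' t) (hr : r ≠ 0) (ht : t ∈ Ioo (0:ℝ) 1)
    (hfe : ∀ s ∈ Ioo (0:ℝ) 1, f (p + r * s) = c * f s + d) :
    HasDerivAt f (c / r * f') (p + r * t) := by
  have hφ : (p + r * t - p) / r = t := by field_simp; ring
  have hφ' : HasDerivAt (fun y => (y - p) / r) r⁻¹ (p + r * t) := by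
    simpa [div_eq_mul_inv] using ((hasDerivAt_id (p + r * t)).sub_const p).div_const r
  have hnear : ∀ᶠ y in nhds (p + r * t), (y - p) / r ∈ Ioo (0:ℝ) 1 :=
    hφ'.continuousAt.preimage_mem_nhds (by rw [hφ]; exact Ioo_mem_nhds ht.1 ht.2)
  have hcomp : HasDerivAt (fun y => c * f ((y - p) / r) + d) (c * (f' * r⁻¹)) (p + r * t) :=
    ((hf.comp_of_eq _ hφ' hφ.symm).const_mul c).add_const d
  refine (hcomp.congr_of_eventuallyEq ?_).congr_deriv (by ring)
  filter_upwards [hnear] with y hy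
  rw [← hfe _ hy]
  congr 1
  field_simp
  ring

theorem integral_sqrt_deriv_of_self_similar {f : ℝ → ℝ} {p r c d : ℝ} (hr : 0 < r) (hc : 0 ≤ c)
    (hfe : ∀ s ∈ Ioo (0:ℝ) 1, f (p + r * s) = c * f s + d)
    (hdiff : ∀ᵐ t, t ∈ Ioo (0:ℝ) 1 → DifferentiableAt ℝ f t) :
    ∫ x in p..p + r, √(deriv f x) = √(r * c) * ∫ t in (0:ℝ)..1, √(deriv f t) := by
  have hsub : ∀ᵐ t, t ∈ uIoc (0:ℝ) 1 → √(deriv f (p + r * t)) = √(c / r) * √(deriv f t) := by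
    have hne : ∀ᵐ t : ℝ, t ≠ 1 := by simp [ae_iff, measure_singleton]
    filter_upwards [hdiff, hne] with t ht ht1 htI
    rw [uIoc_of_le zero_le_one] at htI
    have htI' : t ∈ Ioo (0:ℝ) 1 := ⟨htI.1, lt_of_le_of_ne htI.2 ht1⟩
    rw [((ht htI').hasDerivAt.add_mul_of_self_similar hr.ne' htI' hfe).deriv,
      Real.sqrt_mul (div_nonneg hc hr.le)]
  have hchange := intervalIntegral.integral_comp_add_mul (fun x => √(deriv f x)) hr.ne' p
    (a := 0) (b := 1)
  rw [mul_zero, add_zero, mul_one, intervalIntegral.integral_congr_ae hsub,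
    intervalIntegral.integral_const_mul, smul_eq_mul] at hchange
  have hcoef : r * √(c / r) = √(r * c) := by
    rw [show r * c = r ^ 2 * (c / r) by field_simp, Real.sqrt_mul (sq_nonneg r),
      Real.sqrt_sq hr.le]
  rw [← hcoef, mul_assoc, hchange, ← mul_assoc, mul_inv_cancel₀ hr.ne', one_mul]

namespace MonotoneOn

variable {f : ℝ → ℝ} {a b : ℝ}

theorem ae_differentiableAt_of_mem_Ioo (hf : MonotoneOn f (Icc a b)) :
    ∀ᵐ x, x ∈ Ioo a b → DifferentiableAt ℝ f x := by
  filter_upwards [hf.ae_differentiableWithinAt_of_mem] with x hx hxI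
  exact (hx (Ioo_subset_Icc_self hxI)).differentiableAt (Icc_mem_nhds hxI.1 hxI.2)

theorem intervalIntegrable_sqrt_deriv (hf : MonotoneOn f (Icc a b)) (hab : a ≤ b) :
    IntervalIntegrable (fun x => √(deriv f x)) volume a b := by
  have hderiv : IntervalIntegrable (deriv f) volume a b :=
    MonotoneOn.intervalIntegrable_deriv (by rwa [uIcc_of_le hab])
  refine ((intervalIntegrable_const (c := (1:ℝ))).add hderiv.abs).mono_fun
    (measurable_deriv f).sqrt.aestronglyMeasurable (ae_of_all _ fun x => ?_)
  dsimp only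
  rw [Real.norm_of_nonneg (Real.sqrt_nonneg _), Real.norm_of_nonneg (by positivity)]
  exact Real.sqrt_le_one_add_abs _

theorem ae_hasDerivAt_zero_of_integral_sqrt_deriv_eq_zero (hf : MonotoneOn f (Icc a b))
    (hab : a ≤ b) (h : ∫ x in a..b, √(deriv f x) = 0) :
    ∀ᵐ x ∂volume.restrict (Icc a b), HasDerivAt f 0 x := by
  have hzero := (intervalIntegral.integral_eq_zero_iff_of_le_of_nonneg_ae hab
    (ae_of_all _ fun x => Real.sqrt_nonneg _) (hf.intervalIntegrable_sqrt_deriv hab)).1 h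
  rw [Measure.restrict_congr_set Ioo_ae_eq_Icc.symm, ae_restrict_iff' measurableSet_Ioo]
  filter_upwards [hf.ae_differentiableAt_of_mem_Ioo,
    ae_imp_of_ae_restrict (ae_restrict_of_ae_restrict_of_subset Ioo_subset_Ioc_self hzero)]
    with x hdiff hx hxI
  have hnonneg : 0 ≤ deriv f x := by
    rw [← derivWithin_of_mem_nhds (Icc_mem_nhds hxI.1 hxI.2)]
    exact hf.derivWithin_nonneg
  have hle : deriv f x ≤ 0 := Real.sqrt_eq_zero'.1 (hx hxI)
  exact le_antisymm hle hnonneg ▸ (hdiff hxI).hasDerivAt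

end MonotoneOn

theorem stmt_14_general (a θ : ℝ) (ha : a ∈ Ioo (0:ℝ) 1) (hθ : θ ∈ Ioo (0:ℝ) 1) (hne : θ ≠ a)
    (f : ℝ → ℝ) (hmono : MonotoneOn f (Icc 0 1))
    (heq1 : ∀ t ∈ Icc (0:ℝ) 1, f (a * t) = θ * f t)
    (heq2 : ∀ t ∈ Icc (0:ℝ) 1, f (a + (1 - a) * t) = (1 - θ) * f t + θ) :
    ∀ᵐ x ∂(volume.restrict (Icc (0:ℝ) 1)), HasDerivAt f 0 x := by
  obtain ⟨ha0, ha1⟩ := ha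
  obtain ⟨hθ0, hθ1⟩ := hθ
  have hdiff := hmono.ae_differentiableAt_of_mem_Ioo
  have hleft : ∫ x in 0..a, √(deriv f x) = √(a * θ) * ∫ x in 0..1, √(deriv f x) := by
    simpa using integral_sqrt_deriv_of_self_similar (p := 0) (d := 0) ha0 hθ0.le
      (fun s hs => by simpa using heq1 s (Ioo_subset_Icc_self hs)) hdiff
  have hright : ∫ x in a..1, √(deriv f x) =
      √((1 - a) * (1 - θ)) * ∫ x in 0..1, √(deriv f x) := by
    simpa using integral_sqrt_deriv_of_self_similar (p := a) (sub_pos.2 ha1)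
      (sub_nonneg.2 hθ1.le) (fun s hs => heq2 s (Ioo_subset_Icc_self hs)) hdiff
  have hsplit := intervalIntegral.integral_add_adjacent_intervals
    ((hmono.mono (Icc_subset_Icc_right ha1.le)).intervalIntegrable_sqrt_deriv ha0.le)
    ((hmono.mono (Icc_subset_Icc_left ha0.le)).intervalIntegrable_sqrt_deriv ha1.le)
  have hlt := sqrt_mul_add_sqrt_one_sub_mul_one_sub_lt_one ⟨ha0.le, ha1.le⟩ ⟨hθ0.le, hθ1.le⟩ hne
  have hfix : (1 - (√(a * θ) + √((1 - a) * (1 - θ)))) * ∫ x in 0..1, √(deriv f x) = 0 := by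
    linear_combination hleft + hright - hsplit
  exact hmono.ae_hasDerivAt_zero_of_integral_sqrt_deriv_eq_zero zero_le_one
    ((mul_eq_zero.1 hfix).resolve_left (by linarith))

theorem stmt_14 (a θ : ℝ) (ha : a ∈ Ioo (0:ℝ) 1) (hθ : θ ∈ Ioo (0:ℝ) 1) (hne : θ ≠ a)
    (f : ℝ → ℝ) (hf0 : f 0 = 0) (hf1 : f 1 = 1)
    (hcont : ContinuousOn f (Icc 0 1)) (hmono : MonotoneOn f (Icc 0 1))
    (heq1 : ∀ t ∈ Icc (0:ℝ) 1, f (a * t) = θ * f t)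
    (heq2 : ∀ t ∈ Icc (0:ℝ) 1, f (a + (1 - a) * t) = (1 - θ) * f t + θ) :
    ∀ᵐ x ∂(volume.restrict (Icc (0:ℝ) 1)), HasDerivAt f 0 x :=
  stmt_14_general a θ ha hθ hne f hmono heq1 heq2
end
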